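/- arXiv:0704.0260 — 5 statements merged into one kernel-verified Lean document; each statement's English description precedes it below -/
import Mathlib

section
/- For each integer j with 1 ≤ j ≤ m and each k ∈ ℤ, the function (r²-1)^{j-1} r^{|k|} e^{ikt} satisfies Δ^m u = 0 in the open unit disk, i.e. it is m-harmonic. -/
/-- The Laplacian in polar coordinates:
`Δu = ∂²u/∂r² + (1/r) ∂u/∂r + (1/r²) ∂²u/∂t²`. -/
noncomputable def polarLap (u : ℝ → ℝ → ℂ) (r t : ℝ) : ℂ :=
  iteratedDeriv 2 (fun s => u s t) r + (1 / (r : ℂ)) * deriv (fun s => u s t) r +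
    (1 / (r : ℂ) ^ 2) * iteratedDeriv 2 (fun s => u r s) t

/-- The polar Laplacian as an operator on functions of `(r, t)`. -/
noncomputable def polarLapFun (u : ℝ → ℝ → ℂ) : ℝ → ℝ → ℂ := fun r t => polarLap u r t

/-!
Separating variables, `Δ (P(r) e^{ikt}) = (P'' + P'/r - k² P/r²) e^{ikt}`. On profiles
`P = q(r² - 1) r^{|k|}` the substitution `x = r² - 1` turns this radial operator into
`T q = 4 (((x + 1) q')' + |k| q')`, which lowers the degree of the polynomial `q`. So `Δ^m` maps
`(r² - 1)^{j-1} r^{|k|} e^{ikt}` to the profile of `T^m x^{j-1} = 0` as soon as `j ≤ m`.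
-/

open Polynomial

namespace Polynomial

variable {R : Type*} [CommRing R]

noncomputable def radialProfile (a : ℕ) (q : R[X]) : R[X] :=
  q.comp (X ^ 2 - 1) * X ^ a

noncomputable def reducedLap (a : ℕ) (q : R[X]) : R[X] :=
  C 4 * (derivative ((X + 1) * derivative q) + C (a : R) * derivative q)

theorem euler_radialProfile (a : ℕ) (q : R[X]) :
    X ^ 2 * derivative (derivative (radialProfile a q)) + X * derivative (radialProfile a q)
        - C ((a : R) ^ 2) * radialProfile a q =
      radialProfile a (reducedLap a q) * X ^ 2 := by
  rcases a with _ | _ | a <;>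
    simp only [radialProfile, reducedLap, derivative_mul, derivative_comp, derivative_sub,
      derivative_X_pow_succ, derivative_X, derivative_one, derivative_natCast,
      mul_comp, add_comp, X_comp, one_comp, natCast_comp, ofNat_comp, map_ofNat C 4, map_add,
      map_one, map_pow, map_natCast, Nat.cast_add, Nat.cast_one, Nat.cast_zero, Nat.cast_ofNat,
      pow_zero, map_zero, zero_comp, sub_add_cancel] <;>
    ring

theorem natDegree_reducedLap_le (a : ℕ) (q : R[X]) :
    (reducedLap a q).natDegree ≤ q.natDegree - 1 := by
  have hX : ((X : R[X]) + 1).natDegree ≤ 1 :=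
    (natDegree_add_le _ _).trans (by simpa using natDegree_X_le)
  have hq' := natDegree_derivative_le q
  have hdiv : (derivative ((X + 1) * derivative q)).natDegree ≤ q.natDegree - 1 :=
    calc _ ≤ ((X + 1) * derivative q).natDegree - 1 := natDegree_derivative_le _
      _ ≤ q.natDegree - 1 := by have := natDegree_mul_le (p := X + 1) (q := derivative q); omega
  refine (natDegree_C_mul_le _ _).trans ((natDegree_add_le _ _).trans (max_le hdiv ?_))
  exact (natDegree_C_mul_le _ _).trans hq'

theorem reducedLap_C (a : ℕ) (c : R) : reducedLap a (C c) = 0 := by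
  simp [reducedLap]

theorem natDegree_iterate_reducedLap_le (a n : ℕ) (q : R[X]) :
    ((reducedLap a)^[n] q).natDegree ≤ q.natDegree - n := by
  induction n with
  | zero => rfl
  | succ n ih =>
    rw [Function.iterate_succ_apply']
    have := natDegree_reducedLap_le a ((reducedLap a)^[n] q)
    omega

theorem iterate_reducedLap_eq_zero {a n : ℕ} {q : R[X]} (h : q.natDegree < n) :
    (reducedLap a)^[n] q = 0 := by
  obtain ⟨n, rfl⟩ : ∃ n', n = n' + 1 := ⟨n - 1, by omega⟩
  have hconst : ((reducedLap a)^[n] q).natDegree = 0 := by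
    have := natDegree_iterate_reducedLap_le a n q
    omega
  rw [Function.iterate_succ_apply', eq_C_of_natDegree_eq_zero hconst, reducedLap_C]

end Polynomial

open Complex

noncomputable def fourierMode (k : ℤ) (f : ℝ → ℂ) : ℝ → ℝ → ℂ :=
  fun s τ => f s * cexp (I * k * τ)

theorem deriv_cexp_mul_ofReal (c : ℂ) :
    deriv (fun τ : ℝ => cexp (c * τ)) = fun τ : ℝ => c * cexp (c * τ) := by
  funext τ
  have h := ((ofRealCLM.hasDerivAt (x := τ)).const_mul c).cexp
  simpa [mul_comm] using h.deriv

theorem polarLap_fourierMode (k : ℤ) (f : ℝ → ℂ) (r t : ℝ) :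
    polarLap (fourierMode k f) r t =
      (iteratedDeriv 2 f r + deriv f r / r - k ^ 2 * f r / r ^ 2) * cexp (I * k * t) := by
  simp only [polarLap, fourierMode, iteratedDeriv_succ, iteratedDeriv_zero, deriv_mul_const_field',
    deriv_const_mul_field', deriv_cexp_mul_ofReal]
  linear_combination (f r * cexp (I * k * t) / r ^ 2) * (k : ℂ) ^ 2 * I_sq

theorem deriv_eval_ofReal (P : ℂ[X]) :
    deriv (fun s : ℝ => P.eval (s : ℂ)) = fun s : ℝ => P.derivative.eval (s : ℂ) :=
  funext fun s => ((P.hasDerivAt (s : ℂ)).comp_ofReal).deriv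

theorem polarLap_fourierMode_radialProfile (k : ℤ) (q : ℂ[X]) {r : ℝ} (hr : r ≠ 0) (t : ℝ) :
    polarLap (fourierMode k fun s => (radialProfile k.natAbs q).eval (s : ℂ)) r t =
      fourierMode k
        (fun s => (radialProfile k.natAbs (reducedLap k.natAbs q)).eval (s : ℂ)) r t := by
  have hk : ((k.natAbs : ℂ)) ^ 2 = (k : ℂ) ^ 2 := by
    rw [← Int.cast_natCast, ← Int.cast_pow, Int.natAbs_sq, Int.cast_pow]
  have heuler := congrArg (eval (r : ℂ)) (euler_radialProfile k.natAbs q)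
  simp only [eval_add, eval_sub, eval_mul, eval_pow, eval_X, eval_C, hk] at heuler
  rw [polarLap_fourierMode, iteratedDeriv_succ, iteratedDeriv_one, deriv_eval_ofReal,
    deriv_eval_ofReal, fourierMode]
  have hr' : (r : ℂ) ≠ 0 := ofReal_ne_zero.mpr hr
  field_simp
  linear_combination heuler

-- The closed forms for `polarLap` fail at `r = 0` (junk value `1 / 0 = 0`), so iterates are
-- compared only off `s = 0`.
theorem polarLap_congr {u v : ℝ → ℝ → ℂ} (h : ∀ s τ, s ≠ 0 → u s τ = v s τ) {r : ℝ} (hr : r ≠ 0)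
    (t : ℝ) : polarLap u r t = polarLap v r t := by
  have hs : (fun s => u s t) =ᶠ[nhds r] fun s => v s t :=
    (eventually_ne_nhds hr).mono fun s hs => h s t hs
  have ht : (fun τ => u r τ) = fun τ => v r τ := funext fun τ => h r τ hr
  simp only [polarLap, ht, iteratedDeriv_succ, iteratedDeriv_zero, hs.deriv.deriv_eq, hs.deriv_eq]

theorem iterate_polarLapFun_fourierMode_radialProfile (k : ℤ) (q : ℂ[X]) (m : ℕ) {r : ℝ}
    (hr : r ≠ 0) (t : ℝ) :
    polarLapFun^[m] (fourierMode k fun s => (radialProfile k.natAbs q).eval (s : ℂ)) r t =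
      fourierMode k
        (fun s => (radialProfile k.natAbs ((reducedLap k.natAbs)^[m] q)).eval (s : ℂ)) r t := by
  induction m generalizing r t with
  | zero => rfl
  | succ m ih =>
    rw [Function.iterate_succ_apply', Function.iterate_succ_apply']
    exact (polarLap_congr (fun s τ hs => ih hs τ) hr t).trans
      (polarLap_fourierMode_radialProfile k _ hr t)

/-- For `1 ≤ j ≤ m` and `k ∈ ℤ`, the function `(r²-1)^(j-1) r^(|k|) e^(ikt)` satisfies
`Δ^m u = 0` in the open unit disk, i.e. it is `m`-harmonic. -/
theorem stmt7 (m j : ℕ) (hj : 1 ≤ j) (hjm : j ≤ m) (k : ℤ) :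
    ∀ r t : ℝ, 0 < r → r < 1 →
      (polarLapFun^[m]
        (fun s τ =>
          ((s : ℂ) ^ 2 - 1) ^ (j - 1) * (s : ℂ) ^ k.natAbs *
            Complex.exp (Complex.I * k * τ))) r t = 0 := by
  intro r t hr _
  have hu : (fun s τ : ℝ =>
        ((s : ℂ) ^ 2 - 1) ^ (j - 1) * (s : ℂ) ^ k.natAbs * Complex.exp (Complex.I * k * τ)) =
      fourierMode k fun s => (radialProfile k.natAbs (X ^ (j - 1))).eval (s : ℂ) := by
    ext s τ
    simp [fourierMode, radialProfile]
  have hdeg : (X ^ (j - 1) : ℂ[X]).natDegree < m := by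
    rw [natDegree_X_pow]
    omega
  rw [hu, iterate_polarLapFun_fourierMode_radialProfile k _ m hr.ne',
    iterate_reducedLap_eq_zero hdeg]
  simp [fourierMode, radialProfile]
end

section
/- Suppose (c_k)_{k∈ℤ} satisfies |c_k| ≤ c e^{α|k|} for every α>0 (with c depending on α), and let v be the solution attempt u₂(r,t) = (1/4)(r²-1) ∑_{k∈ℤ} (r^{|k|}/(|k|+1)) c_k e^{ikt}. Then Δu₂(r,t) = ∑_{k∈ℤ} c_k r^{|k|} e^{ikt} in the open unit disk. -/
open Complex Set

theorem summable_add_one_pow_mul_geometric {θ : ℝ} (hθ₀ : 0 < θ) (hθ₁ : θ < 1) (m : ℕ) :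
    Summable fun k : ℤ => ((k.natAbs : ℝ) + 1) ^ m * θ ^ k.natAbs := by
  have hθ : ‖θ‖ < 1 := by rwa [Real.norm_of_nonneg hθ₀.le]
  have hshift := (summable_nat_add_iff (f := fun n : ℕ => (n : ℝ) ^ m * θ ^ n) 1).mpr
    (summable_pow_mul_geometric_of_norm_lt_one m hθ)
  have hnat : Summable fun n : ℕ => ((n : ℝ) + 1) ^ m * θ ^ n :=
    (hshift.mul_left θ⁻¹).congr fun n => by
      push_cast
      field_simp
      ring
  exact .of_nat_of_neg (by simpa using hnat) (by simpa using hnat)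

theorem summable_norm_mul_geometric_of_subexponential {c : ℤ → ℂ}
    (hc : ∀ α : ℝ, 0 < α → ∃ C : ℝ, 0 < C ∧ ∀ k : ℤ, ‖c k‖ ≤ C * Real.exp (α * |(k : ℝ)|))
    (m : ℕ) {ρ : ℝ} (hρ₀ : 0 < ρ) (hρ₁ : ρ < 1) :
    Summable fun k : ℤ => ‖c k‖ * ((k.natAbs : ℝ) + 1) ^ m * ρ ^ k.natAbs := by
  obtain ⟨θ, hρθ, hθ₁⟩ := exists_between hρ₁
  have hθρ : 0 < θ / ρ := div_pos (hρ₀.trans hρθ) hρ₀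
  obtain ⟨C, -, hC⟩ := hc (Real.log (θ / ρ)) (Real.log_pos <| (one_lt_div hρ₀).mpr hρθ)
  refine .of_nonneg_of_le (fun k => by positivity) (fun k => ?_)
    ((summable_add_one_pow_mul_geometric (hρ₀.trans hρθ) hθ₁ m).mul_left C)
  have hck : ‖c k‖ ≤ C * (θ / ρ) ^ k.natAbs := by
    have hk : |(k : ℝ)| = k.natAbs := by rw [Nat.cast_natAbs, Int.cast_abs]
    rw [← Real.exp_log hθρ, ← Real.exp_nat_mul, mul_comm (k.natAbs : ℝ), ← hk]
    exact hC k
  calc ‖c k‖ * ((k.natAbs : ℝ) + 1) ^ m * ρ ^ k.natAbs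
      ≤ C * (θ / ρ) ^ k.natAbs * ((k.natAbs : ℝ) + 1) ^ m * ρ ^ k.natAbs := by gcongr
    _ = C * (((k.natAbs : ℝ) + 1) ^ m * θ ^ k.natAbs) := by
      rw [div_pow]
      field_simp

theorem hasSum_deriv_and_iteratedDeriv_two_tsum_of_isPreconnected {ι F : Type*}
    [NormedAddCommGroup F] [NormedSpace ℝ F] [CompleteSpace F] {f f' f'' : ι → ℝ → F}
    {u : ι → ℝ} {U : Set ℝ} {x₀ x : ℝ} (hu : Summable u) (hU : IsOpen U)
    (hUc : IsPreconnected U) (hf : ∀ n, ∀ y ∈ U, HasDerivAt (f n) (f' n y) y)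
    (hf' : ∀ n, ∀ y ∈ U, HasDerivAt (f' n) (f'' n y) y)
    (hf'u : ∀ n, ∀ y ∈ U, ‖f' n y‖ ≤ u n) (hf''u : ∀ n, ∀ y ∈ U, ‖f'' n y‖ ≤ u n)
    (hx₀ : x₀ ∈ U) (hf₀ : Summable fun n => f n x₀) (hx : x ∈ U) :
    HasSum (fun n => f' n x) (deriv (fun y => ∑' n, f n y) x) ∧
      HasSum (fun n => f'' n x) (iteratedDeriv 2 (fun y => ∑' n, f n y) x) := by
  have hderiv : deriv (fun y => ∑' n, f n y) =ᶠ[nhds x] fun y => ∑' n, f' n y := by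
    filter_upwards [hU.mem_nhds hx] with y hy
    exact (hasDerivAt_tsum_of_isPreconnected hu hU hUc hf hf'u hx₀ hf₀ hy).deriv
  rw [iteratedDeriv_succ, iteratedDeriv_one, hderiv.deriv_eq, hderiv.eq_of_nhds]
  rw [(hasDerivAt_tsum_of_isPreconnected hu hU hUc hf' hf''u hx₀
    (.of_norm_bounded hu fun n => hf'u n x₀ hx₀) hx).deriv]
  exact ⟨(Summable.of_norm_bounded hu fun n => hf'u n x hx).hasSum,
    (Summable.of_norm_bounded hu fun n => hf''u n x hx).hasSum⟩

theorem hasDerivAt_cexp_mul_ofReal (w : ℂ) (τ : ℝ) :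
    HasDerivAt (fun τ : ℝ => cexp (w * τ)) (w * cexp (w * τ)) τ := by
  simpa [mul_comm] using (((hasDerivAt_id' τ).ofReal_comp).const_mul w).cexp

theorem natCast_mul_pow_sub_one {K : Type*} [Field K] (n : ℕ) {x : K} (hx : x ≠ 0) :
    (n : K) * x ^ (n - 1) = n * x ^ n / x := by
  rcases n with _ | n
  · simp
  · rw [Nat.add_sub_cancel, pow_succ, mul_div_assoc, mul_div_cancel_right₀ _ hx]

theorem abs_mul_sq_sub_le {a b s : ℝ} (hb : 0 ≤ b) (hba : b ≤ a) (hs₀ : 0 ≤ s)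
    (hs₁ : s ≤ 1) : |a * s ^ 2 - b| ≤ a := by
  have hs : s ^ 2 ≤ 1 := pow_le_one₀ hs₀ hs₁
  have ha : 0 ≤ a := hb.trans hba
  exact abs_le.mpr ⟨by nlinarith [mul_nonneg ha (sq_nonneg s)],
    by nlinarith [mul_le_mul_of_nonneg_left hs ha]⟩

noncomputable def radialProfile (n : ℕ) (s : ℝ) : ℝ := (s ^ 2 - 1) / 4 * s ^ n

-- The two derivatives of `radialProfile n` away from `0`, written with `sⁿ / s` rather than
-- `s ^ (n - 1)` to avoid truncated subtraction in the exponent.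
noncomputable def radialProfileDeriv (n : ℕ) (s : ℝ) : ℝ :=
  ((n + 2) * s ^ 2 - n) * s ^ n / (4 * s)

noncomputable def radialProfileDeriv2 (n : ℕ) (s : ℝ) : ℝ :=
  ((n + 2) * (n + 1) * s ^ 2 - n * (n - 1)) * s ^ n / (4 * s ^ 2)

section RadialProfile

variable {n : ℕ} {s : ℝ}

theorem hasDerivAt_radialProfile (hs : s ≠ 0) :
    HasDerivAt (radialProfile n) (radialProfileDeriv n s) s := by
  refine ((((hasDerivAt_pow 2 s).sub_const 1).div_const 4).fun_mul
    (hasDerivAt_pow n s)).congr_deriv ?_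
  rw [natCast_mul_pow_sub_one n hs, radialProfileDeriv]
  field_simp
  ring

theorem hasDerivAt_radialProfileDeriv (hs : s ≠ 0) :
    HasDerivAt (radialProfileDeriv n) (radialProfileDeriv2 n s) s := by
  refine (((((hasDerivAt_pow 2 s).const_mul ((n : ℝ) + 2)).sub_const (n : ℝ)).fun_mul
    (hasDerivAt_pow n s)).fun_div ((hasDerivAt_id' s).const_mul 4)
      (by simpa using hs)).congr_deriv ?_
  rw [natCast_mul_pow_sub_one n hs, radialProfileDeriv2]
  field_simp
  ring

theorem radialProfile_laplacian (hs : s ≠ 0) :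
    radialProfileDeriv2 n s + radialProfileDeriv n s / s - n ^ 2 * radialProfile n s / s ^ 2 =
      (n + 1) * s ^ n := by
  unfold radialProfileDeriv2 radialProfileDeriv radialProfile
  field_simp
  ring

theorem abs_radialProfileDeriv_le (hs₀ : 0 < s) (hs₁ : s ≤ 1) :
    |radialProfileDeriv n s| ≤ (n + 1) ^ 2 * (s ^ n / s ^ 2) := by
  have hA := abs_mul_sq_sub_le (a := n + 2) (b := n) (by positivity) (by linarith) hs₀.le hs₁
  calc |radialProfileDeriv n s| = s * |(n + 2) * s ^ 2 - n| / 4 * (s ^ n / s ^ 2) := by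
        rw [radialProfileDeriv, abs_div, abs_mul, abs_of_pos (by positivity : 0 < 4 * s),
          abs_of_pos (by positivity : 0 < s ^ n)]
        field_simp
    _ ≤ 1 * (n + 2) / 4 * (s ^ n / s ^ 2) := by gcongr
    _ ≤ (n + 1) ^ 2 * (s ^ n / s ^ 2) := by gcongr; nlinarith

theorem abs_radialProfileDeriv2_le (hs₀ : 0 < s) (hs₁ : s ≤ 1) :
    |radialProfileDeriv2 n s| ≤ (n + 1) ^ 2 * (s ^ n / s ^ 2) := by
  have hb : (0 : ℝ) ≤ n * (n - 1) := by
    rcases n with _ | n <;> push_cast <;> nlinarith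
  have hA := abs_mul_sq_sub_le (a := (n + 2) * (n + 1)) (b := n * (n - 1)) hb (by nlinarith)
    hs₀.le hs₁
  calc |radialProfileDeriv2 n s|
      = |(n + 2) * (n + 1) * s ^ 2 - n * (n - 1)| / 4 * (s ^ n / s ^ 2) := by
        rw [radialProfileDeriv2, abs_div, abs_mul, abs_of_pos (by positivity : 0 < 4 * s ^ 2),
          abs_of_pos (by positivity : 0 < s ^ n)]
        field_simp
    _ ≤ (n + 2) * (n + 1) / 4 * (s ^ n / s ^ 2) := by gcongr
    _ ≤ (n + 1) ^ 2 * (s ^ n / s ^ 2) := by gcongr; nlinarith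

theorem pow_mul_abs_radialProfile_le {j : ℕ} (hj : j ≤ 2) (hs₀ : 0 < s) (hs₁ : s ≤ 1) :
    n ^ j * |radialProfile n s| ≤ (n + 1) ^ 2 * (s ^ n / s ^ 2) := by
  have hA := abs_mul_sq_sub_le (a := 1) (b := 1) zero_le_one le_rfl hs₀.le hs₁
  have hnj : (n : ℝ) ^ j ≤ (n + 1) ^ 2 :=
    (pow_le_pow_left₀ (Nat.cast_nonneg n) (by linarith) j).trans
      (pow_le_pow_right₀ (by linarith [(Nat.cast_nonneg n : (0 : ℝ) ≤ n)]) hj)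
  calc n ^ j * |radialProfile n s|
      = n ^ j * (s ^ 2 * |1 * s ^ 2 - 1| / 4) * (s ^ n / s ^ 2) := by
        rw [radialProfile, abs_mul, abs_div, abs_of_pos (by positivity : 0 < s ^ n)]
        field_simp
        norm_num
    _ ≤ (n + 1) ^ 2 * (1 * 1 / 4) * (s ^ n / s ^ 2) := by
        gcongr
        exact pow_le_one₀ hs₀.le hs₁
    _ ≤ (n + 1) ^ 2 * (s ^ n / s ^ 2) := by
        gcongr
        nlinarith [(by positivity : (0 : ℝ) ≤ (n + 1) ^ 2)]

end RadialProfile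

theorem norm_mul_ofReal_mul_cexp_I_mul (a : ℂ) (x : ℝ) (k : ℤ) (τ : ℝ) :
    ‖a * x * cexp (I * k * τ)‖ = ‖a‖ * |x| := by
  rw [norm_mul, norm_mul, Complex.norm_exp, Complex.norm_real, Real.norm_eq_abs]
  simp

theorem norm_mul_abs_le_of_mem_Ioo {a : ℂ} {n : ℕ} {r ρ s x : ℝ} (hr : 0 < r)
    (hs : s ∈ Ioo (r / 2) ρ) (hx : |x| ≤ (n + 1) ^ 2 * (s ^ n / s ^ 2)) :
    ‖a‖ * |x| ≤ ‖a‖ * ((n : ℝ) + 1) ^ 2 * ρ ^ n * (4 / r ^ 2) := by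
  have hs₀ : 0 < s := by linarith [hs.1]
  have hinv : 1 / s ^ 2 ≤ 4 / r ^ 2 := by
    rw [div_le_div_iff₀ (by positivity) (by positivity)]
    nlinarith [hs.1]
  have hpow : s ^ n / s ^ 2 ≤ ρ ^ n * (4 / r ^ 2) := by
    rw [div_eq_mul_one_div]
    exact mul_le_mul (pow_le_pow_left₀ hs₀.le hs.2.le n) hinv (by positivity)
      (pow_nonneg (hs₀.trans hs.2).le _)
  calc ‖a‖ * |x| ≤ ‖a‖ * (((n : ℝ) + 1) ^ 2 * (ρ ^ n * (4 / r ^ 2))) :=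
        mul_le_mul_of_nonneg_left (hx.trans (mul_le_mul_of_nonneg_left hpow (by positivity)))
          (norm_nonneg a)
    _ = _ := by ring

section ModeSeries

variable {a : ℤ → ℂ} {r ρ : ℝ}

theorem hasSum_deriv_radialSeries (t : ℝ) (hr : 0 < r) (hrρ : r < ρ) (hρ : ρ ≤ 1)
    (ha : Summable fun k : ℤ => ‖a k‖ * ((k.natAbs : ℝ) + 1) ^ 2 * ρ ^ k.natAbs) :
    HasSum (fun k : ℤ => a k * radialProfileDeriv k.natAbs r * cexp (I * k * t))
        (deriv (fun s => ∑' k : ℤ, a k * radialProfile k.natAbs s * cexp (I * k * t)) r) ∧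
      HasSum (fun k : ℤ => a k * radialProfileDeriv2 k.natAbs r * cexp (I * k * t))
        (iteratedDeriv 2
          (fun s => ∑' k : ℤ, a k * radialProfile k.natAbs s * cexp (I * k * t)) r) := by
  have hrU : r ∈ Ioo (r / 2) ρ := ⟨by linarith, hrρ⟩
  have hU : ∀ s ∈ Ioo (r / 2) ρ, 0 < s ∧ s ≤ 1 := fun s hs =>
    ⟨by linarith [hs.1], by linarith [hs.2]⟩
  have hu := ha.mul_right (4 / r ^ 2)
  refine hasSum_deriv_and_iteratedDeriv_two_tsum_of_isPreconnected
    (f := fun k s => a k * radialProfile k.natAbs s * cexp (I * k * t))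
    (f' := fun k s => a k * radialProfileDeriv k.natAbs s * cexp (I * k * t))
    (f'' := fun k s => a k * radialProfileDeriv2 k.natAbs s * cexp (I * k * t))
    hu isOpen_Ioo isPreconnected_Ioo (fun k s hs => ?_) (fun k s hs => ?_) (fun k s hs => ?_)
    (fun k s hs => ?_) hrU (.of_norm_bounded hu fun k => ?_) hrU
  · exact (((hasDerivAt_radialProfile (hU s hs).1.ne').ofReal_comp).const_mul (a k)).mul_const _
  · exact (((hasDerivAt_radialProfileDeriv (hU s hs).1.ne').ofReal_comp).const_mul
      (a k)).mul_const _
  · exact (norm_mul_ofReal_mul_cexp_I_mul _ _ _ _).trans_le <| norm_mul_abs_le_of_mem_Ioo hr hs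
      (abs_radialProfileDeriv_le (hU s hs).1 (hU s hs).2)
  · exact (norm_mul_ofReal_mul_cexp_I_mul _ _ _ _).trans_le <| norm_mul_abs_le_of_mem_Ioo hr hs
      (abs_radialProfileDeriv2_le (hU s hs).1 (hU s hs).2)
  · have hP := pow_mul_abs_radialProfile_le (n := k.natAbs) (Nat.zero_le 2) hr (hU r hrU).2
    rw [pow_zero, one_mul] at hP
    exact (norm_mul_ofReal_mul_cexp_I_mul _ _ _ _).trans_le <| norm_mul_abs_le_of_mem_Ioo hr hrU hP

theorem hasSum_iteratedDeriv_two_angularSeries (t : ℝ) (hr : 0 < r) (hrρ : r < ρ)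
    (hρ : ρ ≤ 1) (ha : Summable fun k : ℤ => ‖a k‖ * ((k.natAbs : ℝ) + 1) ^ 2 * ρ ^ k.natAbs) :
    HasSum (fun k : ℤ => a k * radialProfile k.natAbs r * (I * k * (I * k * cexp (I * k * t))))
      (iteratedDeriv 2
        (fun τ : ℝ => ∑' k : ℤ, a k * radialProfile k.natAbs r * cexp (I * k * τ)) t) := by
  have hrU : r ∈ Ioo (r / 2) ρ := ⟨by linarith, hrρ⟩
  have hu := ha.mul_right (4 / r ^ 2)
  have hbound (j : ℕ) (hj : j ≤ 2) (k : ℤ) (τ : ℝ) :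
      ‖a k * radialProfile k.natAbs r * ((I * k) ^ j * cexp (I * k * τ))‖ ≤
        ‖a k‖ * ((k.natAbs : ℝ) + 1) ^ 2 * ρ ^ k.natAbs * (4 / r ^ 2) := by
    have hIk : ‖(I * k) ^ j‖ = (k.natAbs : ℝ) ^ j := by
      rw [norm_pow, norm_mul, norm_I, one_mul, Complex.norm_intCast, Nat.cast_natAbs, Int.cast_abs]
    calc ‖a k * radialProfile k.natAbs r * ((I * k) ^ j * cexp (I * k * τ))‖
        = ‖a k‖ * |(k.natAbs : ℝ) ^ j * radialProfile k.natAbs r| := by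
          rw [mul_left_comm, norm_mul, hIk, norm_mul_ofReal_mul_cexp_I_mul, abs_mul, abs_pow,
            Nat.abs_cast]
          ring
      _ ≤ _ := norm_mul_abs_le_of_mem_Ioo hr hrU <| by
          rw [abs_mul, abs_pow, Nat.abs_cast]
          exact pow_mul_abs_radialProfile_le hj hr (by linarith)
  refine (hasSum_deriv_and_iteratedDeriv_two_tsum_of_isPreconnected
    (f := fun k τ => a k * radialProfile k.natAbs r * cexp (I * k * τ))
    (f' := fun k τ => a k * radialProfile k.natAbs r * (I * k * cexp (I * k * τ)))
    (f'' := fun k τ => a k * radialProfile k.natAbs r * (I * k * (I * k * cexp (I * k * τ))))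
    hu isOpen_univ isPreconnected_univ (fun k τ _ => ?_) (fun k τ _ => ?_) (fun k τ _ => ?_)
    (fun k τ _ => ?_) (mem_univ t) (.of_norm_bounded hu fun k => ?_) (mem_univ t)).2
  · exact (hasDerivAt_cexp_mul_ofReal _ τ).const_mul _
  · exact ((hasDerivAt_cexp_mul_ofReal _ τ).const_mul _).const_mul _
  · simpa only [pow_one] using hbound 1 (by norm_num) k τ
  · simpa only [sq, mul_assoc] using hbound 2 le_rfl k τ
  · simpa only [pow_zero, one_mul] using hbound 0 (by norm_num) k t

theorem polarLap_tsum_radialProfile (t : ℝ) (hr : 0 < r) (hrρ : r < ρ) (hρ : ρ ≤ 1)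
    (ha : Summable fun k : ℤ => ‖a k‖ * ((k.natAbs : ℝ) + 1) ^ 2 * ρ ^ k.natAbs) :
    polarLap (fun s τ => ∑' k : ℤ, a k * radialProfile k.natAbs s * cexp (I * k * τ)) r t =
      ∑' k : ℤ, a k * (k.natAbs + 1 : ℂ) * (r : ℂ) ^ k.natAbs * cexp (I * k * t) := by
  obtain ⟨hrad₁, hrad₂⟩ := hasSum_deriv_radialSeries t hr hrρ hρ ha
  have hang := hasSum_iteratedDeriv_two_angularSeries t hr hrρ hρ ha
  refine ((hrad₂.add (hrad₁.mul_left (1 / (r : ℂ)))).add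
    (hang.mul_left (1 / (r : ℂ) ^ 2))).tsum_eq.symm.trans (tsum_congr fun k => ?_)
  have hprofile := congrArg ((↑) : ℝ → ℂ) (radialProfile_laplacian (n := k.natAbs) hr.ne')
  push_cast at hprofile
  have hk : (I * k) * (I * k) = -(k.natAbs : ℂ) ^ 2 := by
    have : ((k.natAbs : ℂ)) ^ 2 = (k : ℂ) ^ 2 := by
      rw [← Int.cast_natCast, ← Int.cast_pow, Int.natAbs_sq, Int.cast_pow]
    linear_combination (k : ℂ) ^ 2 * I_sq + this
  linear_combination (a k * cexp (I * k * t)) * hprofile +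
    (a k * radialProfile k.natAbs r * cexp (I * k * t) / (r : ℂ) ^ 2) * hk

end ModeSeries

/-- If `(c_k)` satisfies the hyperfunction growth condition and
`u₂(r,t) = (1/4)(r²-1) ∑_{k∈ℤ} (r^(|k|)/(|k|+1)) c_k e^(ikt)`, then
`Δu₂(r,t) = ∑_{k∈ℤ} c_k r^(|k|) e^(ikt)` in the open unit disk. -/
theorem stmt12 (c : ℤ → ℂ)
    (hc : ∀ α : ℝ, 0 < α → ∃ C : ℝ, 0 < C ∧ ∀ k : ℤ, ‖c k‖ ≤ C * Real.exp (α * |(k : ℝ)|))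
    (r t : ℝ) (hr : 0 < r) (hr1 : r < 1) :
    polarLap
      (fun s τ => (1/4 : ℂ) * ((s : ℂ) ^ 2 - 1) *
        ∑' k : ℤ, ((s : ℂ) ^ k.natAbs / ((k.natAbs : ℂ) + 1)) * c k *
          Complex.exp (Complex.I * k * τ))
      r t =
    ∑' k : ℤ, c k * (r : ℂ) ^ k.natAbs * Complex.exp (Complex.I * k * t) := by
  have hu : (fun s τ : ℝ => (1/4 : ℂ) * ((s : ℂ) ^ 2 - 1) *
        ∑' k : ℤ, ((s : ℂ) ^ k.natAbs / ((k.natAbs : ℂ) + 1)) * c k * cexp (I * k * τ)) =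
      fun s τ : ℝ => ∑' k : ℤ,
        c k / (k.natAbs + 1 : ℂ) * radialProfile k.natAbs s * cexp (I * k * τ) := by
    funext s τ
    rw [← tsum_mul_left]
    exact tsum_congr fun k => by push_cast [radialProfile]; ring
  have ha : Summable fun k : ℤ =>
      ‖c k / (k.natAbs + 1 : ℂ)‖ * ((k.natAbs : ℝ) + 1) ^ 2 * ((1 + r) / 2) ^ k.natAbs := by
    refine (summable_norm_mul_geometric_of_subexponential hc 2 (ρ := (1 + r) / 2) (by positivity)
      (by linarith)).of_nonneg_of_le (fun k => by positivity) fun k => ?_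
    have hden : (1 : ℝ) ≤ ‖(k.natAbs + 1 : ℂ)‖ := by
      rw [← Nat.cast_add_one, Complex.norm_natCast]
      simp
    gcongr
    rw [norm_div]
    exact div_le_self (norm_nonneg _) hden
  rw [hu, polarLap_tsum_radialProfile t hr (by linarith) (by linarith) ha]
  exact tsum_congr fun k => by rw [div_mul_cancel₀ _ (Nat.cast_add_one_ne_zero k.natAbs)]
end

section
/- For each positive integer j, if (c_k)_{k∈ℤ} satisfies ∑_{k≠0} |c_k|²/|k|^{2j} < ∞ (and c₀ arbitrary), then sup_{0≤r<1} (1-r²)^{2j} ∑_{k∈ℤ} r^{2|k|} |c_k|² < ∞. (Embedding W₂^{-j} ⊂ 𝔅_j.) -/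
/-!
Put `t = r²` and `m = 2j`. With `s = 1 - t` one has `t ^ k ≤ exp (-s k)` and
`(s k) ^ m ≤ m! exp (s k)`, hence `(1 - t) ^ m t ^ k ≤ m! / k ^ m` for every `t ∈ [0, 1]`.
So, uniformly in `r`, the `k`-th term of `(1 - r²) ^ m ∑ r ^ (2|k|) |c_k|²` is dominated by
`m! |c_k|² / |k| ^ m` for `k ≠ 0` and by `|c_0|²` for `k = 0`, a summable majorant.
-/

open Real

theorem one_sub_pow_mul_pow_mul_pow_le_factorial {t : ℝ} (ht₀ : 0 ≤ t) (ht₁ : t ≤ 1) (m k : ℕ) :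
    (1 - t) ^ m * t ^ k * (k : ℝ) ^ m ≤ m.factorial := by
  have hx₀ : 0 ≤ (1 - t) * k := mul_nonneg (sub_nonneg.2 ht₁) k.cast_nonneg
  have hpow : t ^ k ≤ exp (-((1 - t) * k)) := by
    calc t ^ k ≤ exp (-(1 - t)) ^ k :=
          pow_le_pow_left₀ ht₀ (by simpa using one_sub_le_exp_neg (1 - t)) k
      _ = exp (-((1 - t) * k)) := by rw [← exp_nat_mul]; ring_nf
  have hfac : ((1 - t) * k) ^ m ≤ m.factorial * exp ((1 - t) * k) := by
    rw [← div_le_iff₀' (by positivity)]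
    exact pow_div_factorial_le_exp _ hx₀ m
  calc (1 - t) ^ m * t ^ k * (k : ℝ) ^ m = ((1 - t) * k) ^ m * t ^ k := by rw [mul_pow]; ring
    _ ≤ m.factorial * exp ((1 - t) * k) * exp (-((1 - t) * k)) := by gcongr
    _ = m.factorial := by rw [mul_assoc, ← exp_add, add_neg_cancel, exp_zero, mul_one]

theorem summable_div_natAbs_pow_of_summable_subtype {a : ℤ → ℝ} {m : ℕ} (hm : m ≠ 0)
    (ha : Summable fun k : {k : ℤ // k ≠ 0} => a k / (k.1.natAbs : ℝ) ^ m) :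
    Summable fun k : ℤ => a k / (k.natAbs : ℝ) ^ m :=
  (Subtype.val_injective.summable_iff fun k hk => by
    obtain rfl : k = 0 := by by_contra h; exact hk ⟨⟨k, h⟩, rfl⟩
    simp [hm]).1 ha

theorem one_sub_pow_mul_tsum_le {a : ℤ → ℝ} (ha₀ : ∀ k, 0 ≤ a k) {m : ℕ}
    (ha : Summable fun k : ℤ => a k / (k.natAbs : ℝ) ^ m) {t : ℝ} (ht₀ : 0 ≤ t) (ht₁ : t ≤ 1) :
    (1 - t) ^ m * ∑' k : ℤ, t ^ k.natAbs * a k ≤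
      a 0 + m.factorial * ∑' k : ℤ, a k / (k.natAbs : ℝ) ^ m := by
  set b : ℤ → ℝ := fun k => (if k = 0 then a 0 else 0) + m.factorial * (a k / (k.natAbs : ℝ) ^ m)
  have hb : HasSum b (a 0 + m.factorial * ∑' k : ℤ, a k / (k.natAbs : ℝ) ^ m) :=
    (hasSum_ite_eq 0 (a 0)).add (ha.hasSum.mul_left _)
  have hle : ∀ k, (1 - t) ^ m * (t ^ k.natAbs * a k) ≤ b k := by
    intro k
    rcases eq_or_ne k 0 with rfl | hk
    · have h₁ : (1 - t) ^ m ≤ 1 := pow_le_one₀ (sub_nonneg.2 ht₁) (by linarith)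
      have h₂ := ha₀ 0
      simp only [b, if_true, Int.natAbs_zero, pow_zero, one_mul]
      exact le_add_of_le_of_nonneg (mul_le_of_le_one_left h₂ h₁) (by positivity)
    · have hk' : (0 : ℝ) < (k.natAbs : ℝ) ^ m := by positivity
      simp only [b, if_neg hk, zero_add]
      rw [mul_div_assoc', le_div_iff₀ hk']
      calc (1 - t) ^ m * (t ^ k.natAbs * a k) * (k.natAbs : ℝ) ^ m
          = (1 - t) ^ m * t ^ k.natAbs * (k.natAbs : ℝ) ^ m * a k := by ring
        _ ≤ m.factorial * a k := mul_le_mul_of_nonneg_right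
            (one_sub_pow_mul_pow_mul_pow_le_factorial ht₀ ht₁ m k.natAbs) (ha₀ k)
  have hsum : Summable fun k : ℤ => (1 - t) ^ m * (t ^ k.natAbs * a k) :=
    .of_nonneg_of_le (fun k => by have := ha₀ k; have := sub_nonneg.2 ht₁; positivity)
      hle hb.summable
  rw [← tsum_mul_left, ← hb.tsum_eq]
  exact hsum.tsum_le_tsum hle hb.summable

/-- Embedding `W₂^{-j} ⊂ 𝔅_j`: for a positive integer `j`, if
`∑_{k≠0} |c_k|²/|k|^(2j) < ∞` (with `c₀` arbitrary), then
`sup_{0≤r<1} (1-r²)^(2j) ∑_{k∈ℤ} r^(2|k|) |c_k|² < ∞`. -/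
theorem stmt16 (j : ℕ) (hj : 1 ≤ j) (c : ℤ → ℂ)
    (hc : Summable fun k : {k : ℤ // k ≠ 0} => ‖c k.1‖ ^ 2 / (k.1.natAbs : ℝ) ^ (2 * j)) :
    ∃ C : ℝ, ∀ r ∈ Set.Ico (0:ℝ) 1,
      (1 - r ^ 2) ^ (2 * j) * ∑' k : ℤ, r ^ (2 * k.natAbs) * ‖c k‖ ^ 2 ≤ C := by
  have hsum := summable_div_natAbs_pow_of_summable_subtype (a := fun k => ‖c k‖ ^ 2) (by omega) hc
  refine ⟨‖c 0‖ ^ 2 + (2 * j).factorial * ∑' k : ℤ, ‖c k‖ ^ 2 / (k.natAbs : ℝ) ^ (2 * j),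
    fun r ⟨hr₀, hr₁⟩ => ?_⟩
  simp_rw [pow_mul r 2]
  exact one_sub_pow_mul_tsum_le (fun k => sq_nonneg ‖c k‖) hsum (sq_nonneg r)
    (pow_le_one₀ hr₀ hr₁.le)
end

section
/- For each positive integer j and each ε ∈ (0,1), if (c_k)_{k∈ℤ} satisfies sup_{0≤z<1} (1-z)^{2j} ∑_{k∈ℤ} z^{|k|} |c_k|² < ∞, then ∑_{k≠0} |c_k|²/|k|^{2j+ε} < ∞. (Embedding 𝔅_j ⊂ W₂^{-j-ε} for every ε > 0.) -/
/-!
Multiplying `(1 - z)^(2j) ∑ z^|k| |c_k|² ≤ C` by the integrable weight `(1 - z)^(ε - 1)` and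
integrating over `[0, 1)` bounds `∑ |c_k|² ∫₀¹ (1 - z)^(a - 1) z^|k| dz` by `C / ε`, where
`a = 2j + ε`. This Beta integral is at least a constant times `|k|^(-a)`: on `[1 - 1/(2n), 1]`
Bernoulli's inequality gives `z^n ≥ 1/2`, and the weight integrates there to `(2n)^(-a) / a`.
-/

open intervalIntegral Real Set
open MeasureTheory (volume ae_restrict_of_forall_mem)

lemma intervalIntegrable_one_sub_rpow {p : ℝ} (hp : -1 < p) (b : ℝ) :
    IntervalIntegrable (fun z : ℝ => (1 - z) ^ p) volume b 1 := by
  simpa using (intervalIntegrable_rpow' hp (a := 1 - b) (b := 0)).comp_sub_left 1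

lemma integral_one_sub_rpow {p : ℝ} (hp : -1 < p) (b : ℝ) :
    ∫ z in b..1, (1 - z) ^ p = (1 - b) ^ (p + 1) / (p + 1) := by
  rw [integral_comp_sub_left (fun u : ℝ => u ^ p), sub_self, integral_rpow (Or.inl hp),
    zero_rpow (by linarith), sub_zero]

lemma intervalIntegrable_one_sub_rpow_mul_pow {a : ℝ} (ha : 0 < a) (n : ℕ) (b : ℝ) :
    IntervalIntegrable (fun z : ℝ => (1 - z) ^ (a - 1) * z ^ n) volume b 1 :=
  (intervalIntegrable_one_sub_rpow (by linarith) b).mul_continuousOn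
    (continuous_pow n).continuousOn

lemma inv_two_mul_natCast_le_half (n : ℕ) : (2 * n : ℝ)⁻¹ ≤ 1 / 2 := by
  rw [mul_inv, one_div]
  exact mul_le_of_le_one_right (by norm_num) (Nat.cast_inv_le_one n)

lemma one_half_le_one_sub_inv_two_mul_pow (n : ℕ) : 1 / 2 ≤ (1 - (2 * n : ℝ)⁻¹) ^ n := by
  rcases eq_or_ne n 0 with rfl | hn
  · norm_num
  have h := one_add_mul_le_pow (a := -(2 * n : ℝ)⁻¹)
    (by linarith [inv_two_mul_natCast_le_half n]) n
  have hhalf : 1 + n * -(2 * n : ℝ)⁻¹ = 1 / 2 := by field_simp; ring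
  rwa [hhalf, ← sub_eq_add_neg] at h

lemma inv_rpow_le_integral_one_sub_rpow_mul_pow {a : ℝ} (ha : 0 < a) (n : ℕ) :
    ((n : ℝ) ^ a)⁻¹ ≤
      2 ^ (a + 1) * a * ∫ z in (0 : ℝ)..1, (1 - z) ^ (a - 1) * z ^ n := by
  set b : ℝ := 1 - (2 * n : ℝ)⁻¹ with hb
  have hb0 : 0 ≤ b := by linarith [inv_two_mul_natCast_le_half n]
  have hb1 : b ≤ 1 := sub_le_self 1 (by positivity)
  have hK : 0 ≤ 2 ^ (a + 1) * a := by positivity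
  have hnonneg : ∀ z ∈ Icc (0 : ℝ) 1, 0 ≤ (1 - z) ^ (a - 1) * z ^ n := fun z hz =>
    mul_nonneg (rpow_nonneg (by linarith [hz.2]) _) (pow_nonneg hz.1 _)
  have hhalf : ∀ z ∈ Icc b 1, (1 - z) ^ (a - 1) * (1 / 2) ≤ (1 - z) ^ (a - 1) * z ^ n :=
    fun z hz => mul_le_mul_of_nonneg_left
      ((one_half_le_one_sub_inv_two_mul_pow n).trans (pow_le_pow_left₀ hb0 hz.1 n))
      (rpow_nonneg (by linarith [hz.2]) _)
  calc ((n : ℝ) ^ a)⁻¹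
      = 2 ^ (a + 1) * a * ∫ z in b..1, (1 - z) ^ (a - 1) * (1 / 2) := by
        rw [integral_mul_const, integral_one_sub_rpow (by linarith), sub_add_cancel, hb,
          sub_sub_cancel, mul_inv, mul_rpow (by norm_num) (by positivity),
          inv_rpow (by norm_num), inv_rpow (by positivity), rpow_add_one two_ne_zero]
        field_simp
    _ ≤ 2 ^ (a + 1) * a * ∫ z in b..1, (1 - z) ^ (a - 1) * z ^ n :=
        mul_le_mul_of_nonneg_left (integral_mono_on hb1
          ((intervalIntegrable_one_sub_rpow (by linarith) b).mul_const _)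
          (intervalIntegrable_one_sub_rpow_mul_pow ha n b) hhalf) hK
    _ ≤ 2 ^ (a + 1) * a * ∫ z in (0 : ℝ)..1, (1 - z) ^ (a - 1) * z ^ n :=
        mul_le_mul_of_nonneg_left (integral_mono_interval hb0 hb1 le_rfl
          (ae_restrict_of_forall_mem measurableSet_Ioc fun z hz =>
            hnonneg z (Ioc_subset_Icc_self hz))
          (intervalIntegrable_one_sub_rpow_mul_pow ha n 0)) hK

theorem sum_div_rpow_le_of_one_sub_rpow_mul_sum_le {ι : Type*} (s : Finset ι) {x : ι → ℝ}
    (hx : ∀ i ∈ s, 0 ≤ x i) (n : ι → ℕ) {a ε C : ℝ} (ha : 0 < a) (hε : 0 < ε)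
    (hC : ∀ z ∈ Ico (0 : ℝ) 1, (1 - z) ^ (a - ε) * ∑ i ∈ s, z ^ n i * x i ≤ C) :
    ∑ i ∈ s, x i / (n i : ℝ) ^ a ≤ 2 ^ (a + 1) * a * (C / ε) := by
  set K : ℝ := 2 ^ (a + 1) * a
  have hK : 0 ≤ K := by positivity
  have hweighted : ∀ z ∈ Ioo (0 : ℝ) 1,
      ∑ i ∈ s, x i * ((1 - z) ^ (a - 1) * z ^ n i) ≤ C * (1 - z) ^ (ε - 1) := by
    intro z hz
    have h1z : 0 < 1 - z := by linarith [hz.2]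
    have hsplit : (1 - z) ^ (a - 1) = (1 - z) ^ (ε - 1) * (1 - z) ^ (a - ε) := by
      rw [← rpow_add h1z]; ring_nf
    calc ∑ i ∈ s, x i * ((1 - z) ^ (a - 1) * z ^ n i)
        = (1 - z) ^ (ε - 1) * ((1 - z) ^ (a - ε) * ∑ i ∈ s, z ^ n i * x i) := by
          rw [Finset.mul_sum, Finset.mul_sum]
          exact Finset.sum_congr rfl fun i _ => by rw [hsplit]; ring
      _ ≤ (1 - z) ^ (ε - 1) * C :=
          mul_le_mul_of_nonneg_left (hC z (Ioo_subset_Ico_self hz)) (rpow_nonneg h1z.le _)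
      _ = C * (1 - z) ^ (ε - 1) := mul_comm _ _
  have hint : ∀ i,
      IntervalIntegrable (fun z => x i * ((1 - z) ^ (a - 1) * z ^ n i)) volume 0 1 :=
    fun i => (intervalIntegrable_one_sub_rpow_mul_pow ha (n i) 0).const_mul (x i)
  calc ∑ i ∈ s, x i / (n i : ℝ) ^ a
      ≤ ∑ i ∈ s, x i * (K * ∫ z in (0 : ℝ)..1, (1 - z) ^ (a - 1) * z ^ n i) :=
        Finset.sum_le_sum fun i hi => by
          rw [div_eq_mul_inv]
          exact mul_le_mul_of_nonneg_left
            (inv_rpow_le_integral_one_sub_rpow_mul_pow ha _) (hx i hi)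
    _ = K * ∫ z in (0 : ℝ)..1, ∑ i ∈ s, x i * ((1 - z) ^ (a - 1) * z ^ n i) := by
        rw [integral_finsetSum fun i _ => hint i, Finset.mul_sum]
        exact Finset.sum_congr rfl fun i _ => by rw [integral_const_mul]; ring
    _ ≤ K * ∫ z in (0 : ℝ)..1, C * (1 - z) ^ (ε - 1) :=
        mul_le_mul_of_nonneg_left (integral_mono_on_of_le_Ioo zero_le_one
          (by simpa only [Finset.sum_fn] using IntervalIntegrable.sum s fun i _ => hint i)
          ((intervalIntegrable_one_sub_rpow (by linarith) 0).const_mul C) hweighted) hK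
    _ = K * (C / ε) := by
        rw [integral_const_mul, integral_one_sub_rpow (by linarith), sub_zero, one_rpow,
          sub_add_cancel]
        ring

theorem summable_div_rpow_of_one_sub_rpow_mul_sum_le {ι : Type*} {x : ι → ℝ} (hx : 0 ≤ x)
    (n : ι → ℕ) {a ε C : ℝ} (ha : 0 < a) (hε : 0 < ε)
    (hC : ∀ s : Finset ι, ∀ z ∈ Ico (0 : ℝ) 1,
      (1 - z) ^ (a - ε) * ∑ i ∈ s, z ^ n i * x i ≤ C) :
    Summable fun i => x i / (n i : ℝ) ^ a :=
  summable_of_sum_le (fun i => div_nonneg (hx i) (rpow_nonneg (Nat.cast_nonneg _) _))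
    fun s => sum_div_rpow_le_of_one_sub_rpow_mul_sum_le s (fun i _ => hx i) n ha hε (hC s)

theorem stmt17_general (j : ℕ) (ε : ℝ) (hε : ε ∈ Set.Ioo (0:ℝ) 1) (c : ℤ → ℂ)
    (hsum : ∀ z ∈ Set.Ico (0:ℝ) 1, Summable fun k : ℤ => z ^ k.natAbs * ‖c k‖ ^ 2)
    (hb : ∃ C : ℝ, ∀ z ∈ Set.Ico (0:ℝ) 1,
      (1 - z) ^ (2 * j) * ∑' k : ℤ, z ^ k.natAbs * ‖c k‖ ^ 2 ≤ C) :
    Summable fun k : {k : ℤ // k ≠ 0} =>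
      ‖c k.1‖ ^ 2 / (k.1.natAbs : ℝ) ^ ((2 * j : ℝ) + ε) := by
  obtain ⟨C, hC⟩ := hb
  refine summable_div_rpow_of_one_sub_rpow_mul_sum_le (ι := {k : ℤ // k ≠ 0})
    (x := fun k => ‖c k.1‖ ^ 2) (fun k => sq_nonneg ‖c k.1‖) (fun k => k.1.natAbs)
    (a := (2 * j : ℝ) + ε) (add_pos_of_nonneg_of_pos (by positivity) hε.1) hε.1
    (C := C) fun s z hz => ?_
  have hpartial : ∑ k ∈ s, z ^ k.1.natAbs * ‖c k.1‖ ^ 2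
      ≤ ∑' k : ℤ, z ^ k.natAbs * ‖c k‖ ^ 2 := by
    have h := (hsum z hz).sum_le_tsum (s.map (Function.Embedding.subtype _))
      fun k _ => mul_nonneg (pow_nonneg hz.1 _) (sq_nonneg _)
    rwa [Finset.sum_map] at h
  calc (1 - z) ^ ((2 * j : ℝ) + ε - ε) * ∑ k ∈ s, z ^ k.1.natAbs * ‖c k.1‖ ^ 2
      ≤ (1 - z) ^ (2 * j) * ∑' k : ℤ, z ^ k.natAbs * ‖c k‖ ^ 2 := by
        rw [add_sub_cancel_right, ← Nat.cast_ofNat, ← Nat.cast_mul, rpow_natCast]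
        exact mul_le_mul_of_nonneg_left hpartial (pow_nonneg (by linarith [hz.2]) _)
    _ ≤ C := hC z hz

/-- Embedding `𝔅_j ⊂ W₂^{-j-ε}`: for a positive integer `j` and `ε ∈ (0,1)`, if the series
`∑_{k∈ℤ} z^(|k|) |c_k|²` converges for every `z ∈ [0,1)` and
`sup_{0≤z<1} (1-z)^(2j) ∑_{k∈ℤ} z^(|k|) |c_k|² < ∞`, then
`∑_{k≠0} |c_k|²/|k|^(2j+ε) < ∞`. -/
theorem stmt17 (j : ℕ) (hj : 1 ≤ j) (ε : ℝ) (hε : ε ∈ Set.Ioo (0:ℝ) 1) (c : ℤ → ℂ)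
    (hsum : ∀ z ∈ Set.Ico (0:ℝ) 1, Summable fun k : ℤ => z ^ k.natAbs * ‖c k‖ ^ 2)
    (hb : ∃ C : ℝ, ∀ z ∈ Set.Ico (0:ℝ) 1,
      (1 - z) ^ (2 * j) * ∑' k : ℤ, z ^ k.natAbs * ‖c k‖ ^ 2 ≤ C) :
    Summable fun k : {k : ℤ // k ≠ 0} =>
      ‖c k.1‖ ^ 2 / (k.1.natAbs : ℝ) ^ ((2 * j : ℝ) + ε) :=
  stmt17_general j ε hε c hsum hb
end

section
/- Let Φ be a complete Hausdorff topological vector space with continuous embeddings 𝔄 ⊂ Φ ⊂ 𝔄′, and let u be m-harmonic in the unit disk (so u(r,·) ∈ 𝔄 for each r < 1 and u(r,·) → u(1,·) in 𝔄′ as r → 1). Then u(r,·) converges in Φ as r → 1 (to an element of Φ) if and only if the set {u(r,·) : 0 ≤ r < 1} is relatively compact in Φ. -/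
/-!
A map `g` on `[a, b)` with a limit `F` at `b` extends to a continuous map on `[a, b]`, whose
compact image contains the closure of `g '' [a, b)`. Conversely, if `g` stays in a compact set,
it has cluster points at `b⁻`; they are all sent by `e` to the limit `L` of `e ∘ g`, so injectivity
of `e` makes the cluster point unique, and a function into a compact set with a unique cluster
point converges to it.
-/

open Filter Function Set Topology

theorem continuousOn_update_Icc_of_tendsto {γ α : Type*} [LinearOrder γ] [TopologicalSpace γ]
    [OrderTopology γ] [TopologicalSpace α] {g : γ → α} {a b : γ} {F : α} (hg : ContinuousOn g (Ico a b)) (hF : Tendsto g (𝓝[<] b) (𝓝 F)) :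
    ContinuousOn (update g b F) (Icc a b) := by
  intro x hx
  rcases hx.2.lt_or_eq with hxb | rfl
  · rw [continuousWithinAt_update_of_ne hxb.ne]
    exact (hg x ⟨hx.1, hxb⟩).mono_of_mem_nhdsWithin
      (mem_nhdsWithin.2 ⟨Iio b, isOpen_Iio, hxb, fun y hy => ⟨hy.2.1, hy.1⟩⟩)
  · rw [continuousWithinAt_update_same, Icc_sdiff_right]
    exact hF.mono_left (nhdsWithin_mono _ fun _ hy => hy.2)

theorem isCompact_closure_image_Ico_of_tendsto {γ α : Type*} [LinearOrder γ]
    [TopologicalSpace γ] [OrderTopology γ] [CompactIccSpace γ] [TopologicalSpace α] [T2Space α]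
    {g : γ → α} {a b : γ} {F : α} (hg : ContinuousOn g (Ico a b))
    (hF : Tendsto g (𝓝[<] b) (𝓝 F)) : IsCompact (closure (g '' Ico a b)) := by
  have hK : IsCompact (update g b F '' Icc a b) :=
    isCompact_Icc.image_of_continuousOn (continuousOn_update_Icc_of_tendsto hg hF)
  refine hK.of_isClosed_subset isClosed_closure (closure_minimal ?_ hK.isClosed)
  rintro _ ⟨x, hx, rfl⟩
  exact ⟨x, Ico_subset_Icc_self hx, update_of_ne hx.2.ne _ _⟩

theorem Filter.Tendsto.exists_tendsto_of_isCompact {ι α β : Type*} [TopologicalSpace α]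
    [TopologicalSpace β] [T2Space β] {l : Filter ι} [l.NeBot] {f : ι → α} {e : α → β} {L : β}
    (hL : Tendsto (e ∘ f) l (𝓝 L)) (he : Continuous e) (hinj : Injective e) {K : Set α}
    (hK : IsCompact K) (hfK : ∀ᶠ i in l, f i ∈ K) : ∃ F, Tendsto f l (𝓝 F) := by
  have hclusterPt : ∀ x, MapClusterPt x l f → e x = L := fun x hx =>
    eq_of_nhds_neBot (ClusterPt.mono (hx.tendsto_comp he.continuousAt) hL)
  obtain ⟨F, -, hF⟩ := hK.exists_clusterPt (le_principal_iff.2 (mem_map.2 hfK))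
  exact ⟨F, hK.tendsto_nhds_of_unique_mapClusterPt hfK fun x _ hx =>
    hinj ((hclusterPt x hx).trans (hclusterPt F hF).symm)⟩

theorem stmt19_general {Φ X : Type*}
    [UniformSpace Φ] [T2Space Φ]
    [TopologicalSpace X] [T2Space X]
    (e : Φ → X) (he : Continuous e) (hinj : Function.Injective e)
    (g : ℝ → Φ) (hg : ContinuousOn g (Set.Ico 0 1))
    (L : X)
    (hL : Tendsto (fun r => e (g r)) (nhdsWithin 1 (Set.Iio 1)) (nhds L)) :
    (∃ F : Φ, Tendsto g (nhdsWithin 1 (Set.Iio 1)) (nhds F)) ↔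
      IsCompact (closure (g '' Set.Ico 0 1)) := by
  refine ⟨fun ⟨F, hF⟩ => isCompact_closure_image_Ico_of_tendsto hg hF, fun hK => ?_⟩
  have hgK : ∀ᶠ r in 𝓝[<] (1 : ℝ), g r ∈ closure (g '' Ico 0 1) :=
    mem_of_superset (Ico_mem_nhdsLT zero_lt_one) fun r hr => subset_closure ⟨r, hr, rfl⟩
  exact hL.exists_tendsto_of_isCompact he hinj hK hgK

/-- Abstract form of Theorem 2 of the paper.  Let `Φ` be a complete Hausdorff topological
vector space with continuous embeddings `𝔄 ⊂ Φ ⊂ 𝔄′`; here the (Hausdorff) space `X` plays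
the role of `𝔄′` and `e : Φ → X` is the continuous injective embedding.  Let `g : r ↦ u(r,·)`
be the (continuous on `[0,1)`, with values in `𝔄 ⊂ Φ`) family of circle restrictions of an
`m`-harmonic function, which converges in `𝔄′` to its boundary hyperfunction `L = u(1,·)` as
`r → 1⁻`.  Then `g` converges in `Φ` as `r → 1⁻` (to an element of `Φ`) if and only if the
set `{u(r,·) : 0 ≤ r < 1}` is relatively compact in `Φ`. -/
theorem stmt19 {Φ X : Type*}
    [AddCommGroup Φ] [Module ℝ Φ] [UniformSpace Φ] [IsUniformAddGroup Φ]
    [ContinuousSMul ℝ Φ] [CompleteSpace Φ] [T2Space Φ]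
    [TopologicalSpace X] [T2Space X]
    (e : Φ → X) (he : Continuous e) (hinj : Function.Injective e)
    (g : ℝ → Φ) (hg : ContinuousOn g (Set.Ico 0 1))
    (L : X)
    (hL : Tendsto (fun r => e (g r)) (nhdsWithin 1 (Set.Iio 1)) (nhds L)) :
    (∃ F : Φ, Tendsto g (nhdsWithin 1 (Set.Iio 1)) (nhds F)) ↔
      IsCompact (closure (g '' Set.Ico 0 1)) :=
  stmt19_general e he hinj g hg L hL
end
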